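/- For k ∈ ℕ define Φ_{2k} = (1/√2)·[[I_k, I_k],[−i·I_k, i·I_k]]. Then: (i) Φ_{2k} is unitary; (ii) for a 2m×2n complex matrix N, the matrix Φ_{2m}·N·Φ_{2n}^{-1} has all real entries if and only if N is doubled-up, and this correspondence N ↦ Φ_{2m}NΦ_{2n}^{-1} is a bijection between 2m×2n complex doubled-up matrices and 2m×2n real matrices; (iii) Φ_{2k}·J_{2k}·Φ_{2k}^{-1} = i·𝕁_{2k}, where 𝕁_{2k} = [[0, I_k],[−I_k, 0]]; (iv) for every 2m×2n doubled-up complex matrix N, Φ_{2n}·N^♭·Φ_{2m}^{-1} = −𝕁_{2n}·(Φ_{2m}NΦ_{2n}^{-1})⊤·𝕁_{2m}, i.e., the ♭-adjoint corresponds to the ♯-adjoint of the associated real matrix. -/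

import Mathlib

/-!
`Φ_{2k}` is unitary and its entrywise conjugate is `Φ_{2k} Σ_{2k}`. Hence entrywise conjugation
of `Φ_{2m} N Φ_{2n}⁻¹` is conjugation by `Φ` of `Σ_{2m} N^# Σ_{2n}`, so the image is real exactly
when `N` is doubled-up, and a real matrix `Y` comes from `Φ_{2m}⁻¹ Y Φ_{2n}`. For (iv), since `Φ`
is unitary, `Φ_{2n} N^♭ Φ_{2m}⁻¹` factors as `(Φ J Φ⁻¹) (Φ N Φ⁻¹)† (Φ J Φ⁻¹) = (i𝕁) Y† (i𝕁)`,
and `Y† = Yᵀ` for the real matrix `Y = Φ_{2m} N Φ_{2n}⁻¹`.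
-/

open Matrix

noncomputable section

/-- The Krein-space metric `J_{2k} = diag(I_k, -I_k)`. -/
def Jmat (k : ℕ) : Matrix (Fin k ⊕ Fin k) (Fin k ⊕ Fin k) ℂ :=
  Matrix.fromBlocks 1 0 0 (-1)

/-- The block-swap matrix `Σ_{2k} = [[0, I_k],[I_k, 0]]`. -/
def Sig (k : ℕ) : Matrix (Fin k ⊕ Fin k) (Fin k ⊕ Fin k) ℂ :=
  Matrix.fromBlocks 0 1 1 0

/-- A `2r × 2s` complex matrix is doubled-up if `Σ_{2r} X Σ_{2s} = X^#`. -/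
def DoubledUp {r s : ℕ} (X : Matrix (Fin r ⊕ Fin r) (Fin s ⊕ Fin s) ℂ) : Prop :=
  Sig r * X * Sig s = X.map (starRingEnd ℂ)

/-- The ♭-adjoint `X^♭ = J_{2s} X† J_{2r}` of a `2r × 2s` complex matrix. -/
def flatAdj {r s : ℕ} (X : Matrix (Fin r ⊕ Fin r) (Fin s ⊕ Fin s) ℂ) :
    Matrix (Fin s ⊕ Fin s) (Fin r ⊕ Fin r) ℂ :=
  Jmat s * Xᴴ * Jmat r

/-- A `2k × 2k` complex matrix is Bogoliubov if it is doubled-up and ♭-unitary. -/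
def Bogoliubov {k : ℕ} (R : Matrix (Fin k ⊕ Fin k) (Fin k ⊕ Fin k) ℂ) : Prop :=
  DoubledUp R ∧ R * flatAdj R = 1 ∧ flatAdj R * R = 1

/-- `Φ_{2k} = (1/√2)[[I, I],[−iI, iI]]`. -/
def Phi (k : ℕ) : Matrix (Fin k ⊕ Fin k) (Fin k ⊕ Fin k) ℂ :=
  ((Real.sqrt 2 : ℂ))⁻¹ • Matrix.fromBlocks 1 1
    (-(Complex.I • (1 : Matrix (Fin k) (Fin k) ℂ))) (Complex.I • (1 : Matrix (Fin k) (Fin k) ℂ))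

/-- The symplectic unit `𝕁_{2k} = [[0, I],[−I, 0]]` (over `ℂ`). -/
def Jsymp (k : ℕ) : Matrix (Fin k ⊕ Fin k) (Fin k ⊕ Fin k) ℂ :=
  Matrix.fromBlocks 0 1 (-1) 0

section UnitaryConjugation

variable {ι κ R : Type*} [Fintype ι] [DecidableEq ι] [Fintype κ] [DecidableEq κ]
  [CommRing R] [StarRing R] {U : Matrix ι ι R} {V : Matrix κ κ R}

lemma Matrix.mul_mul_conjTranspose_cancel (hU : U ∈ unitaryGroup ι R)
    (hV : V ∈ unitaryGroup κ R) (X : Matrix ι κ R) : U * (Uᴴ * X * V) * Vᴴ = X := by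
  rw [← Matrix.mul_assoc, ← Matrix.mul_assoc, ← star_eq_conjTranspose, mem_unitaryGroup_iff.mp hU,
    Matrix.one_mul, Matrix.mul_assoc, ← star_eq_conjTranspose, mem_unitaryGroup_iff.mp hV,
    Matrix.mul_one]

lemma Matrix.conjTranspose_mul_mul_cancel (hU : U ∈ unitaryGroup ι R)
    (hV : V ∈ unitaryGroup κ R) (X : Matrix ι κ R) : Uᴴ * (U * X * Vᴴ) * V = X := by
  rw [← Matrix.mul_assoc, ← Matrix.mul_assoc, ← star_eq_conjTranspose, mem_unitaryGroup_iff'.mp hU,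
    Matrix.one_mul, Matrix.mul_assoc, ← star_eq_conjTranspose, mem_unitaryGroup_iff'.mp hV,
    Matrix.mul_one]

lemma Matrix.mul_mul_conjTranspose_inj (hU : U ∈ unitaryGroup ι R)
    (hV : V ∈ unitaryGroup κ R) {X Y : Matrix ι κ R} : U * X * Vᴴ = U * Y * Vᴴ ↔ X = Y := by
  refine ⟨fun h => ?_, fun h => h ▸ rfl⟩
  rw [← conjTranspose_mul_mul_cancel hU hV X, h, conjTranspose_mul_mul_cancel hU hV]

end UnitaryConjugation

lemma Matrix.im_eq_zero_iff_map_conj_eq {ι κ : Type*} (M : Matrix ι κ ℂ) :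
    (∀ a b, (M a b).im = 0) ↔ M.map (starRingEnd ℂ) = M := by
  simp only [← Matrix.ext_iff, map_apply, Complex.conj_eq_iff_im]

lemma Matrix.conjTranspose_eq_transpose_of_map_conj_eq {ι κ : Type*} {M : Matrix ι κ ℂ}
    (hM : M.map (starRingEnd ℂ) = M) : Mᴴ = Mᵀ := by
  ext i j
  exact congrFun (congrFun hM j) i

lemma Sig_mul_Sig (k : ℕ) : Sig k * Sig k = 1 := by
  simp [Sig, fromBlocks_multiply, ← fromBlocks_one]

lemma Sig_mul_Sig_mul_mul_Sig_mul_Sig {m n : ℕ} (X : Matrix (Fin m ⊕ Fin m) (Fin n ⊕ Fin n) ℂ) :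
    Sig m * (Sig m * X * Sig n) * Sig n = X := by
  rw [← Matrix.mul_assoc, ← Matrix.mul_assoc, Sig_mul_Sig, Matrix.one_mul, Matrix.mul_assoc,
    Sig_mul_Sig, Matrix.mul_one]

lemma conjTranspose_Sig (k : ℕ) : (Sig k)ᴴ = Sig k := by
  simp [Sig, fromBlocks_conjTranspose]

lemma doubledUp_iff {m n : ℕ} (N : Matrix (Fin m ⊕ Fin m) (Fin n ⊕ Fin n) ℂ) :
    DoubledUp N ↔ Sig m * N.map (starRingEnd ℂ) * Sig n = N := by
  refine ⟨fun h => ?_, fun h => ?_⟩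
  · rw [← h, Sig_mul_Sig_mul_mul_Sig_mul_Sig]
  · rw [DoubledUp]
    conv_lhs => rw [← h]
    exact Sig_mul_Sig_mul_mul_Sig_mul_Sig _

lemma inv_sqrt_two_mul_self : ((Real.sqrt 2 : ℂ))⁻¹ * ((Real.sqrt 2 : ℂ))⁻¹ = 2⁻¹ := by
  rw [← mul_inv, ← Complex.ofReal_mul, Real.mul_self_sqrt zero_le_two, Complex.ofReal_ofNat]

lemma Phi_mem_unitaryGroup (k : ℕ) : Phi k ∈ unitaryGroup (Fin k ⊕ Fin k) ℂ := by
  rw [mem_unitaryGroup_iff, star_eq_conjTranspose]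
  simp only [Phi, conjTranspose_smul, Matrix.smul_mul, Matrix.mul_smul, smul_smul, star_inv₀,
    RCLike.star_def, Complex.conj_ofReal, inv_sqrt_two_mul_self]
  simp [fromBlocks_conjTranspose, fromBlocks_multiply, ← fromBlocks_one, fromBlocks_smul,
    ← two_smul ℂ, smul_smul]

lemma Phi_inv (k : ℕ) : (Phi k)⁻¹ = (Phi k)ᴴ :=
  inv_eq_right_inv (mem_unitaryGroup_iff.mp (Phi_mem_unitaryGroup k))

lemma conjTranspose_Phi_mul_Phi_mul {k : ℕ} {ι : Type*} (X : Matrix (Fin k ⊕ Fin k) ι ℂ) :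
    (Phi k)ᴴ * (Phi k * X) = X := by
  rw [← Matrix.mul_assoc, ← star_eq_conjTranspose,
    mem_unitaryGroup_iff'.mp (Phi_mem_unitaryGroup k),
    Matrix.one_mul]

lemma map_conj_Phi (k : ℕ) : (Phi k).map (starRingEnd ℂ) = Phi k * Sig k := by
  ext (i | i) (j | j) <;> simp [Phi, Sig, one_apply, fromBlocks_multiply] <;> split_ifs <;> simp

lemma map_conj_conjTranspose_Phi (k : ℕ) :
    (Phi k)ᴴ.map (starRingEnd ℂ) = Sig k * (Phi k)ᴴ := by
  rw [conjTranspose_map (starRingEnd ℂ) fun _ => rfl, map_conj_Phi, conjTranspose_mul,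
    conjTranspose_Sig]

lemma Phi_mul_Jmat_mul_conjTranspose (k : ℕ) :
    Phi k * Jmat k * (Phi k)ᴴ = Complex.I • Jsymp k := by
  simp only [Phi, conjTranspose_smul, Matrix.smul_mul, Matrix.mul_smul, smul_smul, star_inv₀,
    RCLike.star_def, Complex.conj_ofReal, inv_sqrt_two_mul_self]
  simp [Jmat, Jsymp, fromBlocks_conjTranspose, fromBlocks_multiply, fromBlocks_smul, ← two_smul ℂ]

section Conjugation

variable {m n : ℕ}

lemma map_conj_Phi_mul_mul (N : Matrix (Fin m ⊕ Fin m) (Fin n ⊕ Fin n) ℂ) :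
    (Phi m * N * (Phi n)ᴴ).map (starRingEnd ℂ)
      = Phi m * (Sig m * N.map (starRingEnd ℂ) * Sig n) * (Phi n)ᴴ := by
  rw [Matrix.map_mul, Matrix.map_mul, map_conj_Phi, map_conj_conjTranspose_Phi]
  simp only [Matrix.mul_assoc]

lemma map_conj_Phi_mul_mul_eq_self_iff (N : Matrix (Fin m ⊕ Fin m) (Fin n ⊕ Fin n) ℂ) :
    (Phi m * N * (Phi n)ᴴ).map (starRingEnd ℂ) = Phi m * N * (Phi n)ᴴ ↔ DoubledUp N := by
  rw [map_conj_Phi_mul_mul, mul_mul_conjTranspose_inj (Phi_mem_unitaryGroup m)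
    (Phi_mem_unitaryGroup n), doubledUp_iff]

lemma existsUnique_doubledUp_Phi_mul_mul_eq {M : Matrix (Fin m ⊕ Fin m) (Fin n ⊕ Fin n) ℂ}
    (hM : M.map (starRingEnd ℂ) = M) :
    ∃! N : Matrix (Fin m ⊕ Fin m) (Fin n ⊕ Fin n) ℂ, DoubledUp N ∧ Phi m * N * (Phi n)ᴴ = M := by
  have hPhi := mul_mul_conjTranspose_cancel (Phi_mem_unitaryGroup m) (Phi_mem_unitaryGroup n) M
  refine ⟨(Phi m)ᴴ * M * Phi n, ⟨?_, hPhi⟩, fun N hN => ?_⟩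
  · rw [← map_conj_Phi_mul_mul_eq_self_iff, hPhi, hM]
  · rw [← mul_mul_conjTranspose_inj (Phi_mem_unitaryGroup m) (Phi_mem_unitaryGroup n), hPhi,
      hN.2]

lemma Phi_mul_flatAdj_mul_conjTranspose (N : Matrix (Fin m ⊕ Fin m) (Fin n ⊕ Fin n) ℂ) :
    Phi n * flatAdj N * (Phi m)ᴴ
      = (Complex.I • Jsymp n) * (Phi m * N * (Phi n)ᴴ)ᴴ * (Complex.I • Jsymp m) := by
  rw [← Phi_mul_Jmat_mul_conjTranspose, ← Phi_mul_Jmat_mul_conjTranspose, conjTranspose_mul,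
    conjTranspose_mul, conjTranspose_conjTranspose, flatAdj]
  simp only [Matrix.mul_assoc, conjTranspose_Phi_mul_Phi_mul]

end Conjugation

/-- Properties of the map `N ↦ Φ_{2m} N Φ_{2n}⁻¹`:
(i) `Φ_{2k}` is unitary;
(ii) `Φ_{2m} N Φ_{2n}⁻¹` has real entries iff `N` is doubled-up, and every real
matrix is the image of a unique doubled-up matrix;
(iii) `Φ_{2k} J_{2k} Φ_{2k}⁻¹ = i 𝕁_{2k}`;
(iv) the ♭-adjoint corresponds to the ♯-adjoint of the associated real matrix. -/
theorem phi_conjugation_properties (k m n : ℕ) :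
    (Phi k ∈ Matrix.unitaryGroup (Fin k ⊕ Fin k) ℂ) ∧
    (∀ N : Matrix (Fin m ⊕ Fin m) (Fin n ⊕ Fin n) ℂ,
      (∀ a b, ((Phi m * N * (Phi n)⁻¹) a b).im = 0) ↔ DoubledUp N) ∧
    (∀ Y : Matrix (Fin m ⊕ Fin m) (Fin n ⊕ Fin n) ℝ,
      ∃! N : Matrix (Fin m ⊕ Fin m) (Fin n ⊕ Fin n) ℂ,
        DoubledUp N ∧ Phi m * N * (Phi n)⁻¹ = Y.map (fun x => (x : ℂ))) ∧
    (Phi k * Jmat k * (Phi k)⁻¹ = Complex.I • Jsymp k) ∧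
    (∀ N : Matrix (Fin m ⊕ Fin m) (Fin n ⊕ Fin n) ℂ, DoubledUp N →
      Phi n * flatAdj N * (Phi m)⁻¹
        = -(Jsymp n * (Phi m * N * (Phi n)⁻¹)ᵀ * Jsymp m)) := by
  simp only [Phi_inv]
  refine ⟨Phi_mem_unitaryGroup k, fun N => ?_, fun Y => ?_, Phi_mul_Jmat_mul_conjTranspose k,
    fun N hN => ?_⟩
  · rw [im_eq_zero_iff_map_conj_eq, map_conj_Phi_mul_mul_eq_self_iff]
  · refine existsUnique_doubledUp_Phi_mul_mul_eq ?_
    ext a b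
    simp
  · rw [Phi_mul_flatAdj_mul_conjTranspose, conjTranspose_eq_transpose_of_map_conj_eq
      ((map_conj_Phi_mul_mul_eq_self_iff N).mpr hN)]
    simp only [Matrix.smul_mul, Matrix.mul_smul, smul_smul, Complex.I_mul_I, neg_one_smul]
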